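/- In the Artin group B(B_n), define α_{ts}, τ_t, β_{ts} by: α_{ts} = (σ_{t-1}···σ_{s+1}) σ_s (σ_{t-1}···σ_{s+1})⁻¹, τ_t = α_{t1} τ_1 α_{t1}⁻¹ for t > 1, and β_{ts} = τ_s⁻¹ α_{ts} τ_s. Then for all t > s: α_{ts} τ_s = τ_s β_{ts} = β_{ts} τ_t = τ_t α_{ts}. -/

import Mathlib

/-- The conjugating word `σ_{t-1} σ_{t-2} ⋯ σ_{s+1}`. -/
def bandWord {G : Type*} [Group G] (σ : ℕ → G) (t s : ℕ) : G :=
  (((List.range' (s + 1) (t - 1 - s)).reverse).map σ).prod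

/-- `α_{ts} = (σ_{t-1}⋯σ_{s+1}) σ_s (σ_{t-1}⋯σ_{s+1})⁻¹`. -/
def alphaB {G : Type*} [Group G] (σ : ℕ → G) (t s : ℕ) : G :=
  bandWord σ t s * σ s * (bandWord σ t s)⁻¹

/-- `τ_t = α_{t1} τ_1 α_{t1}⁻¹` (with `τ_1` itself for `t = 1`). -/
def tauB {G : Type*} [Group G] (σ : ℕ → G) (τ₁ : G) (t : ℕ) : G :=
  if t = 1 then τ₁ else alphaB σ t 1 * τ₁ * (alphaB σ t 1)⁻¹

/-- `β_{ts} = τ_s⁻¹ α_{ts} τ_s`. -/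
def betaB {G : Type*} [Group G] (σ : ℕ → G) (τ₁ : G) (t s : ℕ) : G :=
  (tauB σ τ₁ s)⁻¹ * alphaB σ t s * tauB σ τ₁ s

/-!
Writing `B_t = σ_{t-1} ⋯ σ_1`, every `τ_t` is the conjugate `B_t τ_1 B_t⁻¹`, and `τ_s` commutes
with `σ_j` for `j > s`. Hence `τ_t = α_{ts} τ_s α_{ts}⁻¹`, and `α_{ts}, τ_s` satisfy the length-four
braid relation, being the conjugate by `σ_{t-1} ⋯ σ_{s+1}` of the pair `σ_s, τ_s`; for that pair the
relation follows by induction on `s`, since conjugation by `σ_s σ_{s+1}` sends `σ_s ↦ σ_{s+1}` and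
`τ_s ↦ τ_{s+1}`. The three equalities are then formal consequences of these two facts.
-/

section Group

variable {G : Type*} [Group G]

theorem braid4_conj {x y x' y' : G} (g : G) (hx : g * x * g⁻¹ = x') (hy : g * y * g⁻¹ = y')
    (h : x * y * x * y = y * x * y * x) : x' * y' * x' * y' = y' * x' * y' * x' := by
  subst hx hy
  calc (g * x * g⁻¹) * (g * y * g⁻¹) * (g * x * g⁻¹) * (g * y * g⁻¹)
      = g * (x * y * x * y) * g⁻¹ := by group
    _ = (g * y * g⁻¹) * (g * x * g⁻¹) * (g * y * g⁻¹) * (g * x * g⁻¹) := by rw [h]; group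

theorem conj_mul_conj_of_commute {w x y : G} (h : Commute w y) :
    (w * x * w⁻¹) * y * (w * x * w⁻¹)⁻¹ = (w * x) * y * (w * x)⁻¹ := by
  calc (w * x * w⁻¹) * y * (w * x * w⁻¹)⁻¹ = w * x * (w⁻¹ * y * w⁻¹⁻¹) * (w * x)⁻¹ := by group
    _ = (w * x) * y * (w * x)⁻¹ := by rw [h.inv_left.mul_inv_cancel]

theorem braid4_chain {a T T' : G} (hbr : a * T * a * T = T * a * T * a) (hT' : T' = a * T * a⁻¹) :
    a * T = T * (T⁻¹ * a * T) ∧ T * (T⁻¹ * a * T) = (T⁻¹ * a * T) * T' ∧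
      (T⁻¹ * a * T) * T' = T' * a := by
  have key : (T⁻¹ * a * T) * T' = a * T := by
    calc (T⁻¹ * a * T) * T' = T⁻¹ * (a * T * a * T) * a⁻¹ := by rw [hT']; group
      _ = a * T := by rw [hbr]; group
  exact ⟨by group, by rw [key]; group, by rw [key, hT']; group⟩

end Group

section Braid

variable {G : Type*} [Group G] {σ : ℕ → G} {τ₁ : G} {n : ℕ}

theorem bandWord_succ_self (σ : ℕ → G) (s : ℕ) : bandWord σ (s + 1) s = 1 := by
  simp [bandWord]

theorem bandWord_zero_eq_mul (σ : ℕ → G) {t s : ℕ} (hs : 1 ≤ s) (hst : s < t) :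
    bandWord σ t 0 = bandWord σ t s * σ s * bandWord σ s 0 := by
  have hsplit :
      List.range' 1 (t - 1) = List.range' 1 (s - 1) ++ s :: List.range' (s + 1) (t - 1 - s) := by
    conv_lhs => rw [show t - 1 = (s - 1) + (t - 1 - s + 1) by omega]
    rw [← List.range'_append_1, show 1 + (s - 1) = s by omega, List.range'_succ]
  simp [bandWord, hsplit, mul_assoc]

theorem commute_bandWord {g : G} {t s : ℕ} (h : ∀ i, s < i → i < t → Commute g (σ i)) :
    Commute g (bandWord σ t s) := by
  refine Commute.list_prod_right _ _ fun x hx => ?_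
  obtain ⟨i, hi, rfl⟩ := List.mem_map.1 hx
  obtain ⟨k, hk, rfl⟩ := List.mem_range'.1 (List.mem_reverse.1 hi)
  exact h _ (by omega) (by omega)

theorem tauB_eq_conj_bandWord (htau : ∀ j, 1 < j → j < n → τ₁ * σ j = σ j * τ₁)
    {t : ℕ} (ht : 1 ≤ t) (htn : t ≤ n) :
    tauB σ τ₁ t = bandWord σ t 0 * τ₁ * (bandWord σ t 0)⁻¹ := by
  obtain rfl | ht := ht.eq_or_lt
  · simp [tauB, bandWord_succ_self σ 0]
  have hτB : Commute τ₁ (bandWord σ t 1) :=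
    commute_bandWord fun i hi hit => htau i hi (by omega)
  rw [tauB, if_neg ht.ne', alphaB, conj_mul_conj_of_commute hτB.symm,
    bandWord_zero_eq_mul σ le_rfl ht, bandWord_succ_self σ 0, mul_one]

theorem tauB_eq_conj_of_lt (htau : ∀ j, 1 < j → j < n → τ₁ * σ j = σ j * τ₁)
    {t s : ℕ} (hs : 1 ≤ s) (hst : s < t) (htn : t ≤ n) :
    tauB σ τ₁ t = (bandWord σ t s * σ s) * tauB σ τ₁ s * (bandWord σ t s * σ s)⁻¹ := by
  rw [tauB_eq_conj_bandWord htau (hs.trans hst.le) htn, tauB_eq_conj_bandWord htau hs (by omega),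
    bandWord_zero_eq_mul σ hs hst]
  group

theorem commute_sigma_tauB (hcomm : ∀ i j, 1 < i + 1 → i + 1 < j → j < n → σ i * σ j = σ j * σ i)
    (htau : ∀ j, 1 < j → j < n → τ₁ * σ j = σ j * τ₁)
    {s j : ℕ} (hs : 1 ≤ s) (hsj : s < j) (hjn : j < n) :
    Commute (σ j) (tauB σ τ₁ s) := by
  have hB : Commute (σ j) (bandWord σ s 0) :=
    commute_bandWord fun i hi his => (hcomm i j (by omega) (by omega) hjn).symm
  rw [tauB_eq_conj_bandWord htau hs (by omega)]
  exact (hB.mul_right (htau j (by omega) hjn).symm).mul_right hB.inv_right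

theorem tauB_braid (h1 : σ 1 * τ₁ * σ 1 * τ₁ = τ₁ * σ 1 * τ₁ * σ 1)
    (hbraid : ∀ i, 1 ≤ i → i ≤ n - 2 → σ i * σ (i + 1) * σ i = σ (i + 1) * σ i * σ (i + 1))
    (hcomm : ∀ i j, 1 < i + 1 → i + 1 < j → j < n → σ i * σ j = σ j * σ i)
    (htau : ∀ j, 1 < j → j < n → τ₁ * σ j = σ j * τ₁)
    {s : ℕ} (hs : 1 ≤ s) (hsn : s < n) :
    σ s * tauB σ τ₁ s * σ s * tauB σ τ₁ s = tauB σ τ₁ s * σ s * tauB σ τ₁ s * σ s := by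
  induction s, hs using Nat.le_induction with
  | base => simpa [tauB] using h1
  | succ s hs ih =>
    have hb := hbraid s hs (by omega)
    have hσ : (σ s * σ (s + 1)) * σ s * (σ s * σ (s + 1))⁻¹ = σ (s + 1) := by
      calc (σ s * σ (s + 1)) * σ s * (σ s * σ (s + 1))⁻¹
          = (σ s * σ (s + 1) * σ s) * (σ s * σ (s + 1))⁻¹ := by group
        _ = σ (s + 1) := by rw [hb]; group
    have hτ : (σ s * σ (s + 1)) * tauB σ τ₁ s * (σ s * σ (s + 1))⁻¹ = tauB σ τ₁ (s + 1) := by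
      have hc := commute_sigma_tauB hcomm htau hs (Nat.lt_succ_self s) hsn
      rw [tauB_eq_conj_of_lt htau hs (Nat.lt_succ_self s) hsn.le, bandWord_succ_self, one_mul]
      calc (σ s * σ (s + 1)) * tauB σ τ₁ s * (σ s * σ (s + 1))⁻¹
          = σ s * (σ (s + 1) * tauB σ τ₁ s * (σ (s + 1))⁻¹) * (σ s)⁻¹ := by group
        _ = σ s * tauB σ τ₁ s * (σ s)⁻¹ := by rw [hc.mul_inv_cancel]
    exact braid4_conj _ hσ hτ (ih (by omega))

end Braid

/-- In the Artin group `B(B_n)` (realized in any group by elements `τ_1, σ_1, …, σ_{n-1}`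
satisfying its defining relations), for all `t > s`:
`α_{ts} τ_s = τ_s β_{ts} = β_{ts} τ_t = τ_t α_{ts}`. -/
theorem typeB_dual_generator_relations {G : Type*} [Group G] (n : ℕ) (τ₁ : G) (σ : ℕ → G)
    (h1 : σ 1 * τ₁ * σ 1 * τ₁ = τ₁ * σ 1 * τ₁ * σ 1)
    (hbraid : ∀ i, 1 ≤ i → i ≤ n - 2 → σ i * σ (i + 1) * σ i = σ (i + 1) * σ i * σ (i + 1))
    (hcomm : ∀ i j, 1 < i + 1 → i + 1 < j → j < n → σ i * σ j = σ j * σ i)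
    (htau : ∀ j, 1 < j → j < n → τ₁ * σ j = σ j * τ₁)
    (t s : ℕ) (ht : t ≤ n) (hts : s < t) (hs : 1 ≤ s) :
    alphaB σ t s * tauB σ τ₁ s = tauB σ τ₁ s * betaB σ τ₁ t s ∧
    tauB σ τ₁ s * betaB σ τ₁ t s = betaB σ τ₁ t s * tauB σ τ₁ t ∧
    betaB σ τ₁ t s * tauB σ τ₁ t = tauB σ τ₁ t * alphaB σ t s := by
  have hw : Commute (bandWord σ t s) (tauB σ τ₁ s) :=
    (commute_bandWord fun i hi hit => (commute_sigma_tauB hcomm htau hs hi (by omega)).symm).symm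
  have hbr : alphaB σ t s * tauB σ τ₁ s * alphaB σ t s * tauB σ τ₁ s =
      tauB σ τ₁ s * alphaB σ t s * tauB σ τ₁ s * alphaB σ t s :=
    braid4_conj _ rfl hw.mul_inv_cancel (tauB_braid h1 hbraid hcomm htau hs (by omega))
  have hτ : tauB σ τ₁ t = alphaB σ t s * tauB σ τ₁ s * (alphaB σ t s)⁻¹ := by
    rw [tauB_eq_conj_of_lt htau hs hts ht, alphaB, conj_mul_conj_of_commute hw]
  exact braid4_chain hbr hτ
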